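/- arXiv:1907.12971 — 2 statements merged into one kernel-verified Lean document; each statement's English description precedes it below -/
import Mathlib

section
/- Let A ∈ ℝ^{M×M}, D ∈ ℝ^{N×N}, Q ∈ ℝ^{M×N}, G ∈ ℝ^{N×M}, F(X) = A·X + X·D + Q − X·G·X, and fix X_n ∈ ℝ^{M×N}. Set A_n = A − X_n·G, D_n = D − G·X_n, S_n(X) = A_n·X + X·D_n, and G_n(X) = F(X) − S_n(X). If X : ℝ → ℝ^{M×N} is differentiable and satisfies X'(t) = F(X(t)) for all t, then for every t_n and every h > 0, X(t_n + h) = e^{hA_n}·X(t_n)·e^{hD_n} + h·∫_0^1 e^{(1−s)hA_n}·G_n(X(t_n + s·h))·e^{(1−s)hD_n} ds. -/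
/-!
Since `F = Sₙ + Gₙ`, the rescaled solution `Y s = X (tₙ + s h)` solves the Sylvester
equation `Y' = (h Aₙ) Y + Y (h Dₙ) + h Gₙ(Y)`. Conjugating by the flow of its linear part,
`s ↦ e^{(1-s)hAₙ} Y(s) e^{(1-s)hDₙ}` has derivative `e^{(1-s)hAₙ} h Gₙ(Y(s)) e^{(1-s)hDₙ}`
(the terms in `Aₙ` and `Dₙ` cancel), and the fundamental theorem of calculus on `[0, 1]`
gives the formula.
-/

open MeasureTheory intervalIntegral Matrix

attribute [local instance] Matrix.normedAddCommGroup Matrix.normedSpace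

namespace Matrix

variable {𝕜 : Type*} [RCLike 𝕜] {l m n : Type*}

theorem hasDerivAt_iff_hasDerivAt_apply [Fintype n] {f : ℝ → Matrix m n 𝕜}
    {f' : Matrix m n 𝕜} {t : ℝ} :
    HasDerivAt f f' t ↔ ∀ i j, HasDerivAt (fun s => f s i j) (f' i j) t :=
  hasDerivAt_pi.trans (forall_congr' fun _ => hasDerivAt_pi)

theorem _root_.HasDerivAt.matrix_mul [Fintype m] [Fintype n] {f : ℝ → Matrix l m 𝕜}
    {g : ℝ → Matrix m n 𝕜} {f' : Matrix l m 𝕜} {g' : Matrix m n 𝕜} {t : ℝ}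
    (hf : HasDerivAt f f' t) (hg : HasDerivAt g g' t) :
    HasDerivAt (fun s => f s * g s) (f' * g t + f t * g') t := by
  rw [hasDerivAt_iff_hasDerivAt_apply] at hf hg ⊢
  intro i j
  simp only [add_apply, mul_apply, ← Finset.sum_add_distrib]
  exact HasDerivAt.fun_sum fun k _ => (hf i k).mul (hg k j)

variable [Fintype m] [DecidableEq m] [Fintype n] [DecidableEq n]

/- The library's derivative of `exp` needs a Banach algebra norm, here the `L∞` operator norm;
a derivative only depends on the topology, which that norm shares with the entrywise one. -/
theorem hasDerivAt_exp_smul_const (A : Matrix m m 𝕜) (t : ℝ) :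
    HasDerivAt (fun s : ℝ => NormedSpace.exp (s • A)) (NormedSpace.exp (t • A) * A) t :=
  hasDerivAt_iff_tendsto_slope.mpr <| hasDerivAt_iff_tendsto_slope.mp <|
    @_root_.hasDerivAt_exp_smul_const ℝ _ _ Matrix.linftyOpNormedRing
      Matrix.linftyOpNormedAlgebra (by exact instCompleteSpace m m 𝕜) A t

theorem hasDerivAt_exp_smul_const' (A : Matrix m m 𝕜) (t : ℝ) :
    HasDerivAt (fun s : ℝ => NormedSpace.exp (s • A)) (A * NormedSpace.exp (t • A)) t :=
  hasDerivAt_iff_tendsto_slope.mpr <| hasDerivAt_iff_tendsto_slope.mp <|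
    @_root_.hasDerivAt_exp_smul_const' ℝ _ _ Matrix.linftyOpNormedRing
      Matrix.linftyOpNormedAlgebra (by exact instCompleteSpace m m 𝕜) A t

theorem hasDerivAt_exp_sub_smul_const (A : Matrix m m 𝕜) (t s : ℝ) :
    HasDerivAt (fun s : ℝ => NormedSpace.exp ((t - s) • A))
      (-(NormedSpace.exp ((t - s) • A) * A)) s :=
  ((hasDerivAt_exp_smul_const A (t - s)).scomp s ((hasDerivAt_id s).const_sub t)).congr_deriv
    (neg_one_smul ℝ _)

theorem hasDerivAt_exp_sub_smul_const' (A : Matrix m m 𝕜) (t s : ℝ) :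
    HasDerivAt (fun s : ℝ => NormedSpace.exp ((t - s) • A))
      (-(A * NormedSpace.exp ((t - s) • A))) s :=
  ((hasDerivAt_exp_smul_const' A (t - s)).scomp s ((hasDerivAt_id s).const_sub t)).congr_deriv
    (neg_one_smul ℝ _)

theorem hasDerivAt_exp_mul_mul_exp (A : Matrix m m 𝕜) (D : Matrix n n 𝕜)
    {Y : ℝ → Matrix m n 𝕜} {Y' : Matrix m n 𝕜} (t s : ℝ) (hY : HasDerivAt Y Y' s) :
    HasDerivAt
      (fun s => NormedSpace.exp ((t - s) • A) * Y s * NormedSpace.exp ((t - s) • D))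
      (NormedSpace.exp ((t - s) • A) * (Y' - (A * Y s + Y s * D)) *
        NormedSpace.exp ((t - s) • D)) s := by
  convert ((hasDerivAt_exp_sub_smul_const A t s).matrix_mul hY).matrix_mul
    (hasDerivAt_exp_sub_smul_const' D t s) using 1
  simp only [Matrix.mul_sub, Matrix.sub_mul, Matrix.mul_add, Matrix.add_mul, Matrix.neg_mul,
    Matrix.mul_neg, Matrix.mul_assoc]
  abel

theorem continuous_exp_sub_smul_const (A : Matrix m m 𝕜) (t : ℝ) :
    Continuous fun s : ℝ => NormedSpace.exp ((t - s) • A) :=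
  continuous_iff_continuousAt.2 fun s => (hasDerivAt_exp_sub_smul_const A t s).continuousAt

theorem sylvester_variation_of_constants (A : Matrix m m 𝕜) (D : Matrix n n 𝕜)
    {Y g : ℝ → Matrix m n 𝕜} (hY : ∀ s, HasDerivAt Y (A * Y s + Y s * D + g s) s)
    (hg : Continuous g) (t : ℝ) :
    Y t = NormedSpace.exp (t • A) * Y 0 * NormedSpace.exp (t • D) +
      ∫ s in (0 : ℝ)..t,
        NormedSpace.exp ((t - s) • A) * g s * NormedSpace.exp ((t - s) • D) := by
  have hderiv := fun s => hasDerivAt_exp_mul_mul_exp A D t s (hY s)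
  simp only [add_sub_cancel_left] at hderiv
  have hcont := ((continuous_exp_sub_smul_const A t).matrix_mul hg).matrix_mul
    (continuous_exp_sub_smul_const D t)
  rw [integral_eq_sub_of_hasDerivAt (fun s _ => hderiv s) (hcont.intervalIntegrable 0 t)]
  simp [NormedSpace.exp_zero]

end Matrix

theorem mrde_linearized_variation_of_constants_general (M N : ℕ)
    (A : Matrix (Fin M) (Fin M) ℝ) (D : Matrix (Fin N) (Fin N) ℝ)
    (Q : Matrix (Fin M) (Fin N) ℝ) (G : Matrix (Fin N) (Fin M) ℝ)
    (F : Matrix (Fin M) (Fin N) ℝ → Matrix (Fin M) (Fin N) ℝ)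
    (hF : ∀ Y, F Y = A * Y + Y * D + Q - Y * G * Y)
    (An : Matrix (Fin M) (Fin M) ℝ)
    (Dn : Matrix (Fin N) (Fin N) ℝ)
    (Gn : Matrix (Fin M) (Fin N) ℝ → Matrix (Fin M) (Fin N) ℝ)
    (hGn : ∀ Y, Gn Y = F Y - (An * Y + Y * Dn))
    (X : ℝ → Matrix (Fin M) (Fin N) ℝ)
    (hX : ∀ t, HasDerivAt X (F (X t)) t) :
    ∀ tn : ℝ, ∀ h : ℝ, 0 < h →
      X (tn + h) = NormedSpace.exp (h • An) * X tn * NormedSpace.exp (h • Dn) +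
        h • ∫ s in (0:ℝ)..1,
          NormedSpace.exp (((1 - s) * h) • An) * Gn (X (tn + s * h)) *
            NormedSpace.exp (((1 - s) * h) • Dn) := by
  intro tn h _
  set Y : ℝ → Matrix (Fin M) (Fin N) ℝ := fun s => X (tn + s * h)
  have hY (s : ℝ) : HasDerivAt Y (h • An * Y s + Y s * h • Dn + h • Gn (Y s)) s := by
    refine ((hX (tn + s * h)).scomp s (((hasDerivAt_id s).mul_const h).const_add tn)).congr_deriv
      ?_
    simp only [Y, hGn, Matrix.smul_mul, Matrix.mul_smul, one_mul, smul_sub, smul_add]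
    abel
  have hGn_cont : Continuous Gn := by
    simp only [funext hGn, hF]
    fun_prop
  have hY_cont : Continuous Y := continuous_iff_continuousAt.2 fun s => (hY s).continuousAt
  have := sylvester_variation_of_constants _ _ hY ((hGn_cont.comp hY_cont).const_smul h) 1
  simpa [Y, smul_smul, ← intervalIntegral.integral_smul, mul_comm] using this

/-- Let `F(X) = A·X + X·D + Q − X·G·X`, fix `Xₙ`, set
`Aₙ = A − Xₙ·G`, `Dₙ = D − G·Xₙ`, `Sₙ(X) = Aₙ·X + X·Dₙ` and `Gₙ(X) = F(X) − Sₙ(X)`.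
If `X' = F(X)`, then for every `tₙ` and `h > 0`,
`X(tₙ+h) = e^{hAₙ}·X(tₙ)·e^{hDₙ} + h·∫₀¹ e^{(1−s)hAₙ}·Gₙ(X(tₙ+sh))·e^{(1−s)hDₙ} ds`. -/
theorem mrde_linearized_variation_of_constants (M N : ℕ)
    (A : Matrix (Fin M) (Fin M) ℝ) (D : Matrix (Fin N) (Fin N) ℝ)
    (Q : Matrix (Fin M) (Fin N) ℝ) (G : Matrix (Fin N) (Fin M) ℝ)
    (F : Matrix (Fin M) (Fin N) ℝ → Matrix (Fin M) (Fin N) ℝ)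
    (hF : ∀ Y, F Y = A * Y + Y * D + Q - Y * G * Y)
    (Xn : Matrix (Fin M) (Fin N) ℝ)
    (An : Matrix (Fin M) (Fin M) ℝ) (hAn : An = A - Xn * G)
    (Dn : Matrix (Fin N) (Fin N) ℝ) (hDn : Dn = D - G * Xn)
    (Gn : Matrix (Fin M) (Fin N) ℝ → Matrix (Fin M) (Fin N) ℝ)
    (hGn : ∀ Y, Gn Y = F Y - (An * Y + Y * Dn))
    (X : ℝ → Matrix (Fin M) (Fin N) ℝ)
    (hX : ∀ t, HasDerivAt X (F (X t)) t) :
    ∀ tn : ℝ, ∀ h : ℝ, 0 < h →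
      X (tn + h) = NormedSpace.exp (h • An) * X tn * NormedSpace.exp (h • Dn) +
        h • ∫ s in (0:ℝ)..1,
          NormedSpace.exp (((1 - s) * h) • An) * Gn (X (tn + s * h)) *
            NormedSpace.exp (((1 - s) * h) • Dn) :=
  mrde_linearized_variation_of_constants_general M N A D Q G F hF An Dn Gn hGn X hX
end

section
/- (Backward recursion for φ-function combinations) Let L be an invertible linear endomorphism of a finite-dimensional real normed vector space V, let k ≥ 1, and let N_0, N_1, …, N_k ∈ V. Define W_k = L^{−1}(N_k) and W_j = L^{−1}(N_j + W_{j+1}) for j = k−1, …, 1. Then Σ_{j=0}^{k} φ_j(L)(N_j) = e^{L}(N_0 + W_1) − Σ_{j=1}^{k} (1/(j−1)!)·W_j. -/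
open MeasureTheory intervalIntegral Finset

/-- The `φ`-functions of a continuous linear endomorphism `L`:
`φ₀(L) = e^{L}` and `φⱼ(L) = ∫₀¹ e^{(1−θ)L}·θ^{j−1}/(j−1)! dθ` for `j ≥ 1`. -/
noncomputable def phi {V : Type*} [NormedAddCommGroup V] [NormedSpace ℝ V]
    (j : ℕ) (L : V →L[ℝ] V) : V →L[ℝ] V :=
  if j = 0 then NormedSpace.exp L
  else ∫ θ in (0:ℝ)..1,
    (θ ^ (j - 1) / (Nat.factorial (j - 1) : ℝ)) • NormedSpace.exp ((1 - θ) • L)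

/-!
Integrating `θ ^ m / m! • e^{(1-θ)L}` by parts over `[0, 1]` gives `φ_{m+1}(L) L = φ_m(L) - 1/m!`.
Since `N_j + W_{j+1} = L W_j` (and `N_k = L W_k`), applying this to each term of the sum
makes it telescope from `j = k` down to `j = 1`, leaving `φ_0(L) W_1 = e^L W_1`.
-/

open NormedSpace Nat

section

variable {V : Type*} [NormedAddCommGroup V] [NormedSpace ℝ V]

theorem phi_zero (L : V →L[ℝ] V) : phi 0 L = exp L := if_pos rfl

variable [CompleteSpace V]

theorem continuous_exp_one_sub_smul (L : V →L[ℝ] V) :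
    Continuous fun θ : ℝ => exp ((1 - θ) • L) :=
  (continuous_iff_continuousAt.2 fun x => (exp_analytic (𝕂 := ℝ) x).continuousAt).comp <|
    (continuous_const.sub continuous_id).smul continuous_const

theorem hasDerivAt_exp_one_sub_smul_apply (L : V →L[ℝ] V) (w : V) (θ : ℝ) :
    HasDerivAt (fun θ : ℝ => exp ((1 - θ) • L) w) (-exp ((1 - θ) • L) (L w)) θ := by
  simpa using ((hasDerivAt_exp_smul_const L (1 - θ)).scomp θ
    ((hasDerivAt_id θ).const_sub 1)).clm_apply (hasDerivAt_const θ w)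

theorem phi_succ_apply (L : V →L[ℝ] V) (m : ℕ) (v : V) :
    phi (m + 1) L v = ∫ θ in (0:ℝ)..1, (θ ^ m / m !) • exp ((1 - θ) • L) v := by
  rw [phi, if_neg m.succ_ne_zero, Nat.add_sub_cancel, ContinuousLinearMap.intervalIntegral_apply]
  · rfl
  · exact (((continuous_pow m).div_const _).smul
      (continuous_exp_one_sub_smul L)).intervalIntegrable 0 1

theorem integral_smul_exp_one_sub_smul_apply_map {p p' : ℝ → ℝ}
    (hp : ∀ θ, HasDerivAt p (p' θ) θ) (hp' : Continuous p') (L : V →L[ℝ] V) (w : V) :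
    ∫ θ in (0:ℝ)..1, p θ • exp ((1 - θ) • L) (L w) =
      p 0 • exp L w - p 1 • w + ∫ θ in (0:ℝ)..1, p' θ • exp ((1 - θ) • L) w := by
  have hE : Continuous fun θ : ℝ => exp ((1 - θ) • L) (L w) :=
    (continuous_exp_one_sub_smul L).clm_apply continuous_const
  have parts := integral_smul_deriv_eq_deriv_smul (fun θ _ => hp θ)
    (fun θ _ => hasDerivAt_exp_one_sub_smul_apply L w θ) (hp'.intervalIntegrable 0 1)
    (hE.neg.intervalIntegrable 0 1)
  simp only [smul_neg, intervalIntegral.integral_neg, sub_self, zero_smul, exp_zero, sub_zero,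
    one_smul, one_apply_eq_self] at parts
  rw [neg_eq_iff_eq_neg.mp parts]
  abel

theorem phi_succ_apply_map (L : V →L[ℝ] V) (m : ℕ) (w : V) :
    phi (m + 1) L (L w) = phi m L w - (m ! : ℝ)⁻¹ • w := by
  cases m with
  | zero =>
    rw [phi_succ_apply, phi_zero]
    simpa using integral_smul_exp_one_sub_smul_apply_map
      (fun θ => hasDerivAt_const θ (1:ℝ)) continuous_const L w
  | succ n =>
    have hp (θ : ℝ) : HasDerivAt (fun θ : ℝ => θ ^ (n + 1) / (n + 1)!) (θ ^ n / n !) θ := by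
      refine ((hasDerivAt_pow (n + 1) θ).div_const _).congr_deriv ?_
      push_cast [Nat.factorial_succ, Nat.add_sub_cancel]
      field_simp
    rw [phi_succ_apply, phi_succ_apply, integral_smul_exp_one_sub_smul_apply_map hp
      (by fun_prop)]
    simp only [ne_eq, Nat.add_eq_zero_iff, one_ne_zero, and_false, not_false_eq_true, zero_pow,
      zero_div, zero_smul, one_pow, one_div, zero_sub]
    abel

theorem sum_Icc_phi_apply_of_backward_recursion (L : V →L[ℝ] V) (N W : ℕ → V) {n : ℕ}
    (hlast : L (W (n + 1)) = N (n + 1))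
    (hstep : ∀ j < n, L (W (j + 1)) = N (j + 1) + W (j + 2)) {m : ℕ} (hmn : m ≤ n) :
    ∑ j ∈ Icc (m + 1) (n + 1), phi j L (N j) =
      phi m L (W (m + 1)) - ∑ j ∈ Icc (m + 1) (n + 1), ((j - 1)! : ℝ)⁻¹ • W j := by
  induction hmn using Nat.decreasingInduction with
  | self => simp [← hlast, phi_succ_apply_map]
  | of_succ m hm ih =>
    have hnotin : m + 1 ∉ Icc (m + 1 + 1) (n + 1) := by simp
    rw [← insert_Icc_add_one_left_eq_Icc (by omega : m + 1 ≤ n + 1), sum_insert hnotin,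
      sum_insert hnotin, ih, ← add_sub_assoc, ← map_add,
      ← hstep m hm, phi_succ_apply_map, Nat.add_sub_cancel]
    abel

end

theorem phi_backward_recursion_general {V : Type*} [NormedAddCommGroup V] [NormedSpace ℝ V]
    [FiniteDimensional ℝ V] (L Linv : V →L[ℝ] V)
    (hLinv₂ : ∀ v, L (Linv v) = v)
    (k : ℕ) (hk : 1 ≤ k) (Nv : ℕ → V)
    (W : ℕ → V) (hWk : W k = Linv (Nv k))
    (hW : ∀ j, 1 ≤ j → j ≤ k - 1 → W j = Linv (Nv j + W (j + 1))) :
    ∑ j ∈ Finset.range (k + 1), phi j L (Nv j) =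
      NormedSpace.exp L (Nv 0 + W 1) -
        ∑ j ∈ Finset.Icc 1 k, ((Nat.factorial (j - 1) : ℝ))⁻¹ • W j := by
  have : CompleteSpace V := FiniteDimensional.complete ℝ V
  obtain ⟨n, rfl⟩ : ∃ n, k = n + 1 := ⟨k - 1, by omega⟩
  have hsum := sum_Icc_phi_apply_of_backward_recursion L Nv W (n := n)
    (by rw [hWk, hLinv₂]) (fun j hj => by rw [hW (j + 1) (by omega) (by omega), hLinv₂])
    (zero_le n)
  rw [zero_add] at hsum
  rw [range_succ_eq_Icc_zero, ← insert_Icc_add_one_left_eq_Icc (zero_le _),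
    sum_insert (by simp), zero_add, hsum, phi_zero, map_add]
  abel

/-- **backward recursion.** If `L` is invertible with inverse `Linv`,
`W_k = L⁻¹(N_k)` and `Wⱼ = L⁻¹(Nⱼ + W_{j+1})` for `j = k−1, …, 1`, then
`Σ_{j=0}^{k} φⱼ(L)(Nⱼ) = e^{L}(N₀ + W₁) − Σ_{j=1}^{k} (1/(j−1)!)·Wⱼ`. -/
theorem phi_backward_recursion {V : Type*} [NormedAddCommGroup V] [NormedSpace ℝ V]
    [FiniteDimensional ℝ V] (L Linv : V →L[ℝ] V)
    (hLinv₁ : ∀ v, Linv (L v) = v) (hLinv₂ : ∀ v, L (Linv v) = v)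
    (k : ℕ) (hk : 1 ≤ k) (Nv : ℕ → V)
    (W : ℕ → V) (hWk : W k = Linv (Nv k))
    (hW : ∀ j, 1 ≤ j → j ≤ k - 1 → W j = Linv (Nv j + W (j + 1))) :
    ∑ j ∈ Finset.range (k + 1), phi j L (Nv j) =
      NormedSpace.exp L (Nv 0 + W 1) -
        ∑ j ∈ Finset.Icc 1 k, ((Nat.factorial (j - 1) : ℝ))⁻¹ • W j :=
  phi_backward_recursion_general L Linv hLinv₂ k hk Nv W hWk hW
end
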